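/- arXiv:2307.10131 — 2 statements merged into one kernel-verified Lean document; each statement's English description precedes it below -/
import Mathlib

section
/- Let t be a finite ordered tree, S a zone of t, m ≥ 2 a number, and suppose S has more than m nodes. Then S can be partitioned into at most five zones, one of which has at least m/2 and at most m nodes. -/
/-- Finite ordered unranked trees over an alphabet `α`. -/
inductive OTree (α : Type) : Type
  | node : α → List (OTree α) → OTree α

namespace OTree

/-- The subtree of a tree at a path of child indices, if it exists. -/
def subtreeAux {α : Type} : List ℕ → OTree α → Option (OTree α)
  | [], t => some t
  | i :: p, node _ ts => (ts[i]?).bind (subtreeAux p)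

def subtree {α : Type} (t : OTree α) (p : List ℕ) : Option (OTree α) := subtreeAux p t

/-- `p` is (the path of) a node of `t`. -/
def IsNode {α : Type} (t : OTree α) (p : List ℕ) : Prop := (subtree t p).isSome

/-- The set of nodes (represented by their paths) of `t`. -/
def nodes {α : Type} (t : OTree α) : Set (List ℕ) := {p | IsNode t p}

/-- The number of children of the node `p` of `t`. -/
def numChildren {α : Type} (t : OTree α) (p : List ℕ) : ℕ :=
  match subtree t p with
  | some (node _ ts) => ts.length
  | none => 0

/-- A zone of `t`: a proper subforest (its top nodes form a consecutive interval of
siblings), each node has all or none of its children in the zone, and there is at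
most one vertical connection node (a node whose children are outside the zone). -/
def IsZone {α : Type} (t : OTree α) (S : Set (List ℕ)) : Prop :=
  (∀ p ∈ S, IsNode t p) ∧
  (∀ p ∈ S, (∀ i < numChildren t p, p ++ [i] ∈ S) ∨ (∀ i < numChildren t p, p ++ [i] ∉ S)) ∧
  {p | p ∈ S ∧ 0 < numChildren t p ∧ ∀ i < numChildren t p, p ++ [i] ∉ S}.Subsingleton ∧
  (∀ p ∈ S, ∀ q ∈ S, p ≠ [] → q ≠ [] → p.dropLast ∉ S → q.dropLast ∉ S →
    p.dropLast = q.dropLast ∧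
    ∀ i, p.getLastD 0 ≤ i → i ≤ q.getLastD 0 → p.dropLast ++ [i] ∈ S)

/-- A partition of the zone `S` into the zones collected in `Z`. -/
def IsZonePartition {α : Type} (t : OTree α) (S : Set (List ℕ))
    (Z : Finset (Set (List ℕ))) : Prop :=
  (∀ A ∈ Z, IsZone t A) ∧
  ((Z : Set (Set (List ℕ))).PairwiseDisjoint id) ∧
  ⋃₀ (Z : Set (Set (List ℕ))) = S

end OTree

/-!
Consecutive sibling branches of a zone `S` (together, possibly, with the branch at the root)
form a zone, and cutting off the strict branch below a node `z` leaves a zone as long as `z`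
is then its only vertical connection node.

If some branch has more than `m` nodes, descend from it: at a node `z`, take the shortest run
of leftmost child branches with at least `m / 2` nodes. Either the run has at most `m` nodes,
or its last branch has at least `m / 2` nodes below its top and we descend into it. The run
and the remaining child branches of the final `z` are two zones. What is left, `S` minus the
strict branch of `z`, has the vertical connection nodes `z` and possibly the one node `w` of
`S`; cutting between the top-level branches containing `z` and `w`, or at the fork of the
paths to `z` and `w` inside a common branch, splits it into at most three zones, none of
which contains both.

If every branch has at most `m` nodes, the same shortest-run argument on the top-level
branches of `S` gives a partition into at most three zones.
-/

namespace List

variable {β : Type*}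

theorem exists_fork_of_not_prefix : ∀ {l₁ l₂ : List β}, ¬ l₁ <+: l₂ → ¬ l₂ <+: l₁ →
    ∃ c a b r₁ r₂, a ≠ b ∧ l₁ = c ++ a :: r₁ ∧ l₂ = c ++ b :: r₂
  | [], _, h, _ => absurd nil_prefix h
  | _ :: _, [], _, h => absurd nil_prefix h
  | a :: l₁, b :: l₂, h₁, h₂ => by
    by_cases hab : a = b
    · subst hab
      obtain ⟨c, a', b', r₁, r₂, hne, rfl, rfl⟩ :=
        exists_fork_of_not_prefix (fun h => h₁ (cons_prefix_cons.2 ⟨rfl, h⟩))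
          (fun h => h₂ (cons_prefix_cons.2 ⟨rfl, h⟩))
      exact ⟨a :: c, a', b', r₁, r₂, hne, rfl, rfl⟩
    · exact ⟨[], a, b, l₁, l₂, hab, rfl, rfl⟩

theorem eq_of_append_singleton_prefix {l c : List β} {a b : β} (ha : c ++ [a] <+: l)
    (hb : c ++ [b] <+: l) : a = b := by
  simpa using (prefix_of_prefix_length_le ha hb (by simp)).eq_of_length (by simp)

end List

theorem Nat.le_apply_zero_or_exists_crossing {g : ℕ → ℕ} {c : ℕ} :
    ∀ {n}, c ≤ g n → c ≤ g 0 ∨ ∃ l < n, g l < c ∧ c ≤ g (l + 1)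
  | 0, h => Or.inl h
  | n + 1, h => by
    by_cases hn : c ≤ g n
    · exact (le_apply_zero_or_exists_crossing hn).imp_right
        fun ⟨l, hl, h'⟩ => ⟨l, by omega, h'⟩
    · exact Or.inr ⟨n, by omega, by omega, h⟩

namespace OTree

variable {α : Type} {t : OTree α}

theorem subtreeAux_append (p q : List ℕ) (u : OTree α) :
    subtreeAux (p ++ q) u = (subtreeAux p u).bind (subtreeAux q) := by
  induction p generalizing u with
  | nil => simp [subtreeAux]
  | cons i p ih =>
    obtain ⟨a, ts⟩ := u
    simp [subtreeAux, ih, Option.bind_assoc]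

theorem lt_numChildren_of_isNode {x : List ℕ} {i : ℕ} (h : IsNode t (x ++ [i])) :
    i < numChildren t x := by
  rw [IsNode, subtree, subtreeAux_append] at h
  rw [numChildren, subtree]
  rcases hx : subtreeAux x t with _ | ⟨a, ts⟩
  · simp [hx] at h
  · cases hi : ts[i]? with
    | none => simp [hx, subtreeAux, hi] at h
    | some v => exact (List.getElem?_eq_some_iff.1 hi).1

theorem exists_not_isNode (t : OTree α) : ∃ p, ¬ IsNode t p := by
  obtain ⟨a, ts⟩ := t
  exact ⟨[ts.length], by simp [IsNode, subtree, subtreeAux]⟩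

def branch (S : Set (List ℕ)) (x : List ℕ) : Set (List ℕ) :=
  {q | x <+: q ∧ ∀ a, x <+: a → a <+: q → a ∈ S}

def strictBranch (S : Set (List ℕ)) (x : List ℕ) : Set (List ℕ) := branch S x \ {x}

def forest (S : Set (List ℕ)) (π : List ℕ) (j k : ℕ) : Set (List ℕ) :=
  {q | ∃ i, j ≤ i ∧ i < k ∧ q ∈ branch S (π ++ [i])}

def connSet (t : OTree α) (S : Set (List ℕ)) : Set (List ℕ) :=
  {p | p ∈ S ∧ 0 < numChildren t p ∧ ∀ i < numChildren t p, p ++ [i] ∉ S}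

/-- The last clause of `IsZone`, with the roots of `X` written as `π ++ [i]`. -/
def SiblingRoots (X : Set (List ℕ)) : Prop :=
  ∀ (π π' : List ℕ) (i i' : ℕ), π ++ [i] ∈ X → π' ++ [i'] ∈ X → π ∉ X → π' ∉ X →
    π = π' ∧ ∀ l, i ≤ l → l ≤ i' → π ++ [l] ∈ X

structure IsClosedPart (S X : Set (List ℕ)) : Prop where
  subset : X ⊆ S
  append_mem : ∀ q ∈ X, ∀ c, q ++ [c] ∈ S → q ++ [c] ∈ X
  siblingRoots : SiblingRoots X

variable {S X Y P Q A B : Set (List ℕ)} {Z₁ Z₂ : Finset (Set (List ℕ))}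
  {ρ x y z w q π : List ℕ} {c i j k m : ℕ}

theorem mem_of_mem_branch (h : q ∈ branch S x) : q ∈ S := h.2 q h.1 List.prefix_rfl

theorem branch_subset : branch S x ⊆ S := fun _ => mem_of_mem_branch

theorem base_mem_of_mem_branch (h : q ∈ branch S x) : x ∈ S := h.2 x List.prefix_rfl h.1

theorem mem_branch_self (h : x ∈ S) : x ∈ branch S x :=
  ⟨List.prefix_rfl, fun _ h₁ h₂ => h₁.eq_of_length_le h₂.length_le ▸ h⟩

theorem branch_eq_empty (h : x ∉ S) : branch S x = ∅ :=
  Set.eq_empty_of_forall_notMem fun _ hq => h (base_mem_of_mem_branch hq)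

theorem mem_branch_trans (hq : q ∈ branch S y) (hy : y ∈ branch S x) : q ∈ branch S x := by
  refine ⟨hy.1.trans hq.1, fun a hxa haq => ?_⟩
  rcases List.prefix_or_prefix_of_prefix haq hq.1 with hay | hya
  · exact hy.2 a hxa hay
  · exact hq.2 a hya haq

theorem mem_branch_of_prefix (hq : q ∈ branch S x) (hxy : x <+: y) (hyq : y <+: q) :
    q ∈ branch S y :=
  ⟨hyq, fun a hya haq => hq.2 a (hxy.trans hya) haq⟩

theorem append_mem_branch (hq : q ∈ branch S x) (hc : q ++ [c] ∈ S) : q ++ [c] ∈ branch S x := by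
  refine ⟨hq.1.trans (List.prefix_append q [c]), fun a hxa ha => ?_⟩
  rcases List.prefix_concat_iff.1 ha with rfl | ha
  · exact hc
  · exact hq.2 a hxa ha

theorem mem_branch_of_append_mem_branch (h : q ++ [c] ∈ branch S x) (hne : q ++ [c] ≠ x) :
    q ∈ branch S x :=
  ⟨(List.prefix_concat_iff.1 h.1).resolve_left hne.symm,
    fun a hxa haq => h.2 a hxa (haq.trans (List.prefix_append q [c]))⟩

theorem append_mem_strictBranch (hq : q ∈ branch S y) (hc : q ++ [c] ∈ S) :
    q ++ [c] ∈ strictBranch S y := by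
  refine ⟨append_mem_branch hq hc, fun h => ?_⟩
  have := (Set.mem_singleton_iff.1 h ▸ hq.1).length_le
  simp at this

theorem mem_branch_of_append_mem_strictBranch (h : q ++ [c] ∈ strictBranch S y) :
    q ∈ branch S y :=
  mem_branch_of_append_mem_branch h.1 h.2

theorem strictBranch_subset : strictBranch S y ⊆ S := fun _ h => mem_of_mem_branch h.1

theorem ncard_branch (hfin : S.Finite) (hx : x ∈ S) :
    (branch S x).ncard = (strictBranch S x).ncard + 1 :=
  (Set.ncard_sdiff_singleton_add_one (mem_branch_self hx) (hfin.subset branch_subset)).symm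

theorem eq_of_mem_branch_append {i' : ℕ} (h : q ∈ branch S (π ++ [i]))
    (h' : q ∈ branch S (π ++ [i'])) : i = i' :=
  List.eq_of_append_singleton_prefix h.1 h'.1

theorem forest_subset : forest S π j k ⊆ S := fun _ ⟨_, _, _, h⟩ => mem_of_mem_branch h

theorem branch_subset_forest (hj : j ≤ i) (hk : i < k) :
    branch S (π ++ [i]) ⊆ forest S π j k :=
  fun _ h => ⟨i, hj, hk, h⟩

theorem forest_self : forest S π k k = ∅ :=
  Set.eq_empty_of_forall_notMem fun _ ⟨_, hj, hk, _⟩ => by omega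

theorem forest_succ : forest S π k (k + 1) = branch S (π ++ [k]) := by
  ext q
  refine ⟨fun ⟨i, hj, hk, h⟩ => ?_, fun h => ⟨k, le_rfl, k.lt_succ_self, h⟩⟩
  obtain rfl : i = k := by omega
  exact h

theorem forest_union {s : ℕ} (hjs : j ≤ s) (hsk : s ≤ k) :
    forest S π j s ∪ forest S π s k = forest S π j k := by
  ext q
  constructor
  · rintro (⟨i, hj, hs, h⟩ | ⟨i, hs, hk, h⟩)
    exacts [⟨i, hj, by omega, h⟩, ⟨i, by omega, hk, h⟩]
  · rintro ⟨i, hj, hk, h⟩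
    rcases Nat.lt_or_ge i s with hs | hs
    exacts [Or.inl ⟨i, hj, hs, h⟩, Or.inr ⟨i, hs, hk, h⟩]

theorem disjoint_forest {j' k' : ℕ} (h : k ≤ j') :
    Disjoint (forest S π j k) (forest S π j' k') :=
  Set.disjoint_left.2 fun _ ⟨_, _, hk, hq⟩ ⟨_, hj', _, hq'⟩ => by
    have := eq_of_mem_branch_append hq hq'
    omega

theorem disjoint_branch_nil_forest (hπ : π ∉ S) :
    Disjoint (branch S []) (forest S π j k) :=
  Set.disjoint_left.2 fun _ hq ⟨i, _, _, hq'⟩ =>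
    hπ (hq.2 π List.nil_prefix ((List.prefix_append π [i]).trans hq'.1))

theorem ncard_forest_succ (hfin : S.Finite) (h : j ≤ k) :
    (forest S π j (k + 1)).ncard = (forest S π j k).ncard + (branch S (π ++ [k])).ncard := by
  rw [← forest_union h k.le_succ, forest_succ,
    Set.ncard_union_eq (forest_succ (S := S) ▸ disjoint_forest le_rfl)
      (hfin.subset forest_subset) (hfin.subset branch_subset)]

theorem strictBranch_eq_forest (hS : IsZone t S) (hz : z ∈ S) :
    strictBranch S z = forest S z 0 (numChildren t z) := by
  ext q
  constructor
  · rintro ⟨hq, hne⟩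
    obtain ⟨_ | ⟨c, r⟩, rfl⟩ := hq.1
    · simp at hne
    have hc : z ++ [c] <+: z ++ c :: r := ⟨r, by simp⟩
    have hcS : z ++ [c] ∈ S := hq.2 _ (List.prefix_append z [c]) hc
    exact ⟨c, c.zero_le, lt_numChildren_of_isNode (hS.1 _ hcS), hc,
      fun a hca haq => hq.2 a ((List.prefix_append z [c]).trans hca) haq⟩
  · rintro ⟨i, -, -, hq⟩
    have hi := append_mem_strictBranch (mem_branch_self hz) (base_mem_of_mem_branch hq)
    refine ⟨mem_branch_trans hq hi.1, fun h => ?_⟩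
    have := (Set.mem_singleton_iff.1 h ▸ hq.1).length_le
    simp at this

theorem IsZone.siblingRoots (hS : IsZone t S) : SiblingRoots S := by
  intro π π' i i' h h' hπ hπ'
  simpa only [List.dropLast_concat, List.getLastD_concat] using
    hS.2.2.2 _ h _ h' (by simp) (by simp) (by simpa) (by simpa)

theorem SiblingRoots.forall_dropLast (h : SiblingRoots X) :
    ∀ p ∈ X, ∀ q ∈ X, p ≠ [] → q ≠ [] → p.dropLast ∉ X → q.dropLast ∉ X →
      p.dropLast = q.dropLast ∧
        ∀ i, p.getLastD 0 ≤ i → i ≤ q.getLastD 0 → p.dropLast ++ [i] ∈ X := by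
  intro p hp q hq hp₀ hq₀
  obtain ⟨π, i, rfl⟩ : ∃ π i, p = π ++ [i] := ⟨_, _, (List.dropLast_append_getLast hp₀).symm⟩
  obtain ⟨π', i', rfl⟩ : ∃ π i, q = π ++ [i] := ⟨_, _, (List.dropLast_append_getLast hq₀).symm⟩
  simpa only [List.dropLast_concat, List.getLastD_concat] using h π π' i i' hp hq

theorem IsZone.append_mem_of_le (hS : IsZone t S) {i₁ i₂ : ℕ} (h₁ : π ++ [i₁] ∈ S)
    (h₂ : π ++ [i₂] ∈ S) (hi₁ : i₁ ≤ i) (hi₂ : i ≤ i₂) : π ++ [i] ∈ S := by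
  by_cases hπ : π ∈ S
  · rcases hS.2.1 π hπ with hall | hnone
    · exact hall i (hi₂.trans_lt (lt_numChildren_of_isNode (hS.1 _ h₂)))
    · exact absurd h₁ (hnone i₁ (lt_numChildren_of_isNode (hS.1 _ h₁)))
  · exact (hS.siblingRoots π π i₁ i₂ h₁ h₂ hπ hπ).2 i hi₁ hi₂

theorem isClosedPart_self (hS : IsZone t S) : IsClosedPart S S :=
  ⟨subset_rfl, fun _ _ _ h => h, hS.siblingRoots⟩

theorem isClosedPart_forest (hS : IsZone t S) : IsClosedPart S (forest S π j k) := by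
  refine ⟨forest_subset, fun q ⟨i, hj, hk, hq⟩ c hc => ⟨i, hj, hk, append_mem_branch hq hc⟩, ?_⟩
  have root : ∀ {π' i'}, π' ++ [i'] ∈ forest S π j k → π' ∉ forest S π j k →
      π' = π ∧ j ≤ i' ∧ i' < k := by
    rintro π' i' ⟨l, hj, hk, h⟩ hπ'
    by_cases he : π' ++ [i'] = π ++ [l]
    · obtain ⟨rfl, rfl⟩ : π' = π ∧ i' = l := by simpa using he
      exact ⟨rfl, hj, hk⟩
    · exact absurd ⟨l, hj, hk, mem_branch_of_append_mem_branch h he⟩ hπ'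
  intro π₁ π₂ i₁ i₂ h₁ h₂ hπ₁ hπ₂
  obtain ⟨rfl, hj₁, -⟩ := root h₁ hπ₁
  obtain ⟨rfl, -, hk₂⟩ := root h₂ hπ₂
  exact ⟨rfl, fun l hl₁ hl₂ => ⟨l, by omega, by omega,
    mem_branch_self (hS.append_mem_of_le (forest_subset h₁) (forest_subset h₂) hl₁ hl₂)⟩⟩

theorem IsClosedPart.branch_nil_union (hX : IsClosedPart S X) :
    IsClosedPart S (branch S [] ∪ X) := by
  refine ⟨Set.union_subset branch_subset hX.subset, ?_, ?_⟩
  · rintro q (hq | hq) c hc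
    exacts [Or.inl (append_mem_branch hq hc), Or.inr (hX.append_mem q hq c hc)]
  have root : ∀ {π i}, π ++ [i] ∈ branch S [] ∪ X → π ∉ branch S [] ∪ X → π ++ [i] ∈ X ∧ π ∉ X := by
    rintro π i (h | h) hπ
    · exact absurd (Or.inl (mem_branch_of_append_mem_branch h (by simp))) hπ
    · exact ⟨h, fun h' => hπ (Or.inr h')⟩
  intro π₁ π₂ i₁ i₂ h₁ h₂ hπ₁ hπ₂
  obtain ⟨h₁, hπ₁⟩ := root h₁ hπ₁
  obtain ⟨h₂, hπ₂⟩ := root h₂ hπ₂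
  exact (hX.siblingRoots π₁ π₂ i₁ i₂ h₁ h₂ hπ₁ hπ₂).imp_right
    fun h l hl₁ hl₂ => Or.inr (h l hl₁ hl₂)

theorem IsClosedPart.isZone_diff_strictBranch (hS : IsZone t S) (hX : IsClosedPart S X)
    (hy : y ∈ X → ∀ w ∈ connSet t S, w ∈ X \ strictBranch S y → w = y) :
    IsZone t (X \ strictBranch S y) := by
  have hsub : X \ strictBranch S y ⊆ S := Set.sdiff_subset.trans hX.subset
  have child : ∀ q ∈ X \ strictBranch S y, q ≠ y → ∀ c, q ++ [c] ∈ S →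
      q ++ [c] ∈ X \ strictBranch S y := fun q hq hqy c hc =>
    ⟨hX.append_mem q hq.1 c hc, fun h => hq.2 ⟨mem_branch_of_append_mem_strictBranch h, hqy⟩⟩
  have roots : SiblingRoots (X \ strictBranch S y) := by
    have root : ∀ {π i}, π ++ [i] ∈ X \ strictBranch S y → π ∉ X \ strictBranch S y → π ∉ X :=
      fun h hπ hπX => h.2 (append_mem_strictBranch (not_not.1 fun h' => hπ ⟨hπX, h'⟩).1 (hsub h))
    intro π₁ π₂ i₁ i₂ h₁ h₂ hπ₁ hπ₂
    obtain ⟨rfl, hl⟩ := hX.siblingRoots π₁ π₂ i₁ i₂ h₁.1 h₂.1 (root h₁ hπ₁) (root h₂ hπ₂)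
    exact ⟨rfl, fun l hl₁ hl₂ => ⟨hl l hl₁ hl₂, fun h =>
      h₁.2 (append_mem_strictBranch (mem_branch_of_append_mem_strictBranch h) (hsub h₁))⟩⟩
  refine ⟨fun p hp => hS.1 p (hsub hp), fun p hp => ?_, ?_, roots.forall_dropLast⟩
  · by_cases hpy : p = y
    · subst hpy
      exact Or.inr fun i _ h => h.2 (append_mem_strictBranch (mem_branch_self (hsub hp)) (hsub h))
    · exact (hS.2.1 p (hsub hp)).imp (fun hall i hi => child p hp hpy i (hall i hi))
        fun hnone i hi h => hnone i hi (hsub h)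
  · have key : ∀ p ∈ X \ strictBranch S y, 0 < numChildren t p →
        (∀ i < numChildren t p, p ++ [i] ∉ X \ strictBranch S y) → p = y ∨ p ∈ connSet t S := by
      intro p hp hpos hnone
      refine or_iff_not_imp_left.2 fun hpy => ⟨hsub hp, hpos, fun i hi h => ?_⟩
      exact hnone i hi (child p hp hpy i h)
    rintro p ⟨hp, hpos, hnone⟩ p' ⟨hp', hpos', hnone'⟩
    rcases key p hp hpos hnone with rfl | hpc <;> rcases key p' hp' hpos' hnone' with rfl | hp'c
    · rfl
    · exact (hy hp.1 p' hp'c hp').symm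
    · exact hy hp'.1 p hpc hp
    · exact hS.2.2.1 hpc hp'c

theorem IsClosedPart.isZone (hS : IsZone t S) (hX : IsClosedPart S X) : IsZone t X := by
  obtain ⟨y, hy⟩ := exists_not_isNode t
  have hyS : y ∉ S := fun h => hy (hS.1 y h)
  have := hX.isZone_diff_strictBranch hS (y := y) fun h => absurd (hX.subset h) hyS
  rwa [strictBranch, branch_eq_empty hyS, Set.empty_sdiff, Set.sdiff_empty] at this

open scoped Classical

theorem isZonePartition_singleton (h : IsZone t S) : IsZonePartition t S {S} :=
  ⟨by simpa using h, by simp, by simp⟩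

theorem IsZonePartition.union (h₁ : IsZonePartition t P Z₁) (h₂ : IsZonePartition t Q Z₂)
    (hPQ : Disjoint P Q) : IsZonePartition t (P ∪ Q) (Z₁ ∪ Z₂) := by
  obtain ⟨hz₁, hd₁, hu₁⟩ := h₁
  obtain ⟨hz₂, hd₂, hu₂⟩ := h₂
  refine ⟨fun A hA => (Finset.mem_union.1 hA).elim (hz₁ A) (hz₂ A), ?_, ?_⟩
  · rw [Finset.coe_union]
    exact hd₁.union hd₂ fun A hA B hB _ =>
      hPQ.mono (hu₁ ▸ Set.subset_sUnion_of_mem hA) (hu₂ ▸ Set.subset_sUnion_of_mem hB)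
  · rw [Finset.coe_union, Set.sUnion_union, hu₁, hu₂]

theorem isZonePartition_pair (hA : IsZone t A) (hB : IsZone t B) (hAB : Disjoint A B) :
    IsZonePartition t (A ∪ B) {A, B} := by
  rw [Finset.insert_eq]
  exact (isZonePartition_singleton hA).union (isZonePartition_singleton hB) hAB

theorem isZonePartition_forest_pair (hS : IsZone t S) {s : ℕ} (hjs : j ≤ s) (hsk : s ≤ k) :
    IsZonePartition t (forest S π j k) {forest S π j s, forest S π s k} := by
  rw [← forest_union hjs hsk]
  exact isZonePartition_pair ((isClosedPart_forest hS).isZone hS)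
    ((isClosedPart_forest hS).isZone hS) (disjoint_forest le_rfl)

theorem mem_branch_nil_or_mem_branch_root (hq : q ∈ S) :
    q ∈ branch S [] ∨ ∃ π i, π ++ [i] ∈ S ∧ π ∉ S ∧ q ∈ branch S (π ++ [i]) := by
  induction q using List.reverseRecOn with
  | nil => exact Or.inl (mem_branch_self hq)
  | append_singleton π i ih =>
    by_cases hπ : π ∈ S
    · exact (ih hπ).imp (append_mem_branch · hq)
        fun ⟨π', i', h₁, h₂, h₃⟩ => ⟨π', i', h₁, h₂, append_mem_branch h₃ hq⟩
    · exact Or.inr ⟨π, i, hq, hπ, mem_branch_self hq⟩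

theorem IsZone.exists_eq_branch_nil_union_forest (hS : IsZone t S) :
    ∃ π, π ∉ S ∧ ∃ n, S = branch S [] ∪ forest S π 0 n := by
  by_cases hroot : ∃ π i, π ++ [i] ∈ S ∧ π ∉ S
  · obtain ⟨π, i, hi, hπ⟩ := hroot
    refine ⟨π, hπ, numChildren t π, Set.Subset.antisymm (fun q hq => ?_)
      (Set.union_subset branch_subset forest_subset)⟩
    rcases mem_branch_nil_or_mem_branch_root hq with hq | ⟨π', i', hi', hπ', hq⟩
    · exact Or.inl hq
    obtain rfl := (hS.siblingRoots π' π i' i hi' hi hπ' hπ).1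
    exact Or.inr ⟨i', i'.zero_le, lt_numChildren_of_isNode (hS.1 _ hi'), hq⟩
  · push Not at hroot
    obtain ⟨π, hπ⟩ := exists_not_isNode t
    refine ⟨π, fun h => hπ (hS.1 π h), 0, ?_⟩
    rw [forest_self, Set.union_empty]
    refine Set.Subset.antisymm (fun q hq => ?_) branch_subset
    obtain hq | ⟨π', i', hi', hπ', -⟩ := mem_branch_nil_or_mem_branch_root hq
    exacts [hq, absurd (hroot π' i' hi') hπ']

theorem disjoint_branch_nil_union_forest {s n : ℕ} (hπ : π ∉ S) :
    Disjoint (branch S [] ∪ forest S π 0 s) (forest S π s n) :=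
  Set.disjoint_union_left.2 ⟨disjoint_branch_nil_forest hπ, disjoint_forest le_rfl⟩

theorem branch_nil_union_forest_union {s n : ℕ} (hs : s ≤ n) :
    branch S [] ∪ forest S π 0 s ∪ forest S π s n = branch S [] ∪ forest S π 0 n := by
  rw [Set.union_assoc, forest_union s.zero_le hs]

theorem exists_cut_of_ne {n i' : ℕ} (hi : i < n) (hi' : i' < n) (hne : i ≠ i')
    (hz : z ∈ branch S (π ++ [i])) (hw : w ∈ branch S (π ++ [i'])) :
    ∃ s ≤ n, z ∈ forest S π 0 s ∧ w ∈ forest S π s n ∨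
      z ∈ forest S π s n ∧ w ∈ forest S π 0 s := by
  rcases hne.lt_or_gt with h | h
  · exact ⟨i', hi'.le, Or.inl ⟨⟨i, i.zero_le, h, hz⟩, ⟨i', le_rfl, hi', hw⟩⟩⟩
  · exact ⟨i, hi.le, Or.inr ⟨⟨i, le_rfl, hi, hz⟩, ⟨i', i'.zero_le, h, hw⟩⟩⟩

theorem exists_common_branch_or_cut {n : ℕ} (hSeq : S = branch S [] ∪ forest S π 0 n)
    (hz : z ∈ S) (hw : w ∈ S) :
    (∃ ρ, z ∈ branch S ρ ∧ w ∈ branch S ρ) ∨ ∃ s ≤ n,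
      z ∈ branch S [] ∪ forest S π 0 s ∧ w ∈ forest S π s n ∨
      z ∈ forest S π s n ∧ w ∈ branch S [] ∪ forest S π 0 s := by
  rw [hSeq] at hz hw
  rcases hz with hz | ⟨i, -, hi, hz⟩ <;> rcases hw with hw | ⟨i', -, hi', hw⟩
  · exact Or.inl ⟨[], hz, hw⟩
  · exact Or.inr ⟨0, n.zero_le, Or.inl ⟨Or.inl hz, i', i'.zero_le, hi', hw⟩⟩
  · exact Or.inr ⟨0, n.zero_le, Or.inr ⟨⟨i, i.zero_le, hi, hz⟩, Or.inl hw⟩⟩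
  · by_cases hii : i = i'
    · subst hii
      exact Or.inl ⟨_, hz, hw⟩
    · obtain ⟨s, hs, h⟩ := exists_cut_of_ne hi hi' hii hz hw
      exact Or.inr ⟨s, hs, h.imp (And.imp Or.inr id) (And.imp id Or.inr)⟩

theorem isZone_diff_of_separated (hS : IsZone t S) (hX : IsClosedPart S X) (hXY : Disjoint X Y)
    (hw : w ∈ connSet t S) (hsep : z ∈ X → w ∈ Y) : IsZone t (X \ strictBranch S z) :=
  hX.isZone_diff_strictBranch hS fun hz _ hw' hw'X =>
    absurd (hS.2.2.1 hw' hw ▸ hw'X.1) (Set.disjoint_right.1 hXY (hsep hz))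

theorem isZonePartition_diff_of_separated (hS : IsZone t S) (hX : IsClosedPart S X)
    (hY : IsClosedPart S Y) (hXY : Disjoint X Y) (hw : w ∈ connSet t S)
    (hsep : z ∈ X ∧ w ∈ Y ∨ z ∈ Y ∧ w ∈ X) :
    IsZonePartition t ((X ∪ Y) \ strictBranch S z)
      {X \ strictBranch S z, Y \ strictBranch S z} := by
  rw [Set.union_sdiff_distrib]
  refine isZonePartition_pair (isZone_diff_of_separated hS hX hXY hw fun hz => ?_)
    (isZone_diff_of_separated hS hY hXY.symm hw fun hz => ?_)
    (hXY.mono Set.sdiff_subset Set.sdiff_subset)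
  · exact hsep.elim And.right fun h => absurd hz (Set.disjoint_right.1 hXY h.1)
  · exact hsep.elim (fun h => absurd hz (Set.disjoint_left.1 hXY h.1)) And.right

theorem exists_fork_of_mem_branch (hz : z ∈ branch S ρ) (hw : w ∈ branch S ρ)
    (hzw : ¬ z <+: w) (hwz : ¬ w <+: z) :
    ∃ c i i', i ≠ i' ∧ c ∈ S ∧ z ∈ branch S (c ++ [i]) ∧ w ∈ branch S (c ++ [i']) := by
  obtain ⟨c, i, i', r, r', hne, rfl, rfl⟩ := List.exists_fork_of_not_prefix hzw hwz
  have hi : c ++ [i] <+: c ++ i :: r := ⟨r, by simp⟩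
  have hi' : c ++ [i'] <+: c ++ i' :: r' := ⟨r', by simp⟩
  have hρc : ρ <+: c := by
    rcases le_or_gt ρ.length c.length with h | h
    · exact List.prefix_of_prefix_length_le hz.1 ((List.prefix_append c [i]).trans hi) h
    · exact absurd (List.eq_of_append_singleton_prefix
        (List.prefix_of_prefix_length_le hi hz.1 (by simpa using h))
        (List.prefix_of_prefix_length_le hi' hw.1 (by simpa using h))) hne
  exact ⟨c, i, i', hne, hz.2 c hρc ((List.prefix_append c [i]).trans hi),
    mem_branch_of_prefix hz (hρc.trans (List.prefix_append c [i])) hi,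
    mem_branch_of_prefix hw (hρc.trans (List.prefix_append c [i'])) hi'⟩

theorem exists_zonePartition_diff_of_mem_branch (hS : IsZone t S) (hz : z ∈ branch S ρ)
    (hw : w ∈ branch S ρ) (hwc : w ∈ connSet t S) (hwz : w ∉ branch S z) :
    ∃ Z : Finset (Set (List ℕ)), IsZonePartition t (S \ strictBranch S z) Z ∧ Z.card ≤ 3 := by
  have hzw : ¬ z <+: w := fun h => hwz (mem_branch_of_prefix hw hz.1 h)
  have hwz' : ¬ w <+: z := by
    rintro ⟨_ | ⟨c, r⟩, rfl⟩
    · exact hwz (by simpa using mem_branch_self (mem_of_mem_branch hw))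
    · have hc : w ++ [c] ∈ S := hz.2 _ (hw.1.trans (List.prefix_append w [c])) ⟨r, by simp⟩
      exact hwc.2.2 c (lt_numChildren_of_isNode (hS.1 _ hc)) hc
  obtain ⟨c, i, i', hne, hc, hzc, hwc'⟩ := exists_fork_of_mem_branch hz hw hzw hwz'
  have hi := lt_numChildren_of_isNode (hS.1 _ (base_mem_of_mem_branch hzc))
  have hi' := lt_numChildren_of_isNode (hS.1 _ (base_mem_of_mem_branch hwc'))
  have hDn := strictBranch_eq_forest hS hc
  obtain ⟨s, hs, hsep⟩ := exists_cut_of_ne hi hi' hne hzc hwc'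
  have hwDn : w ∈ strictBranch S c := by
    rw [hDn]
    exact branch_subset_forest i'.zero_le hi' hwc'
  have hzDn : strictBranch S z ⊆ strictBranch S c := fun q hq => by
    rw [hDn]
    exact branch_subset_forest i.zero_le hi (mem_branch_trans hq.1 hzc)
  have hSc := (isClosedPart_self hS).isZone_diff_strictBranch hS (y := c)
    fun _ w' hw' hw'S => absurd (hS.2.2.1 hw' hwc ▸ hw'S.2) (not_not.2 hwDn)
  have hpart := isZonePartition_diff_of_separated hS (isClosedPart_forest hS)
    (isClosedPart_forest hS) (disjoint_forest le_rfl) hwc hsep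
  rw [forest_union s.zero_le hs, ← hDn] at hpart
  have hall := (isZonePartition_singleton hSc).union hpart
    (Set.disjoint_sdiff_left.mono_right Set.sdiff_subset)
  rw [Set.sdiff_union_sdiff_cancel strictBranch_subset hzDn] at hall
  refine ⟨_, hall, (Finset.card_union_le _ _).trans ?_⟩
  grw [Finset.card_singleton, Finset.card_le_two]

theorem exists_zonePartition_diff_strictBranch (hS : IsZone t S) (hz : z ∈ S) :
    ∃ Z : Finset (Set (List ℕ)), IsZonePartition t (S \ strictBranch S z) Z ∧ Z.card ≤ 3 := by
  by_cases hconn : ∀ w ∈ connSet t S, w ∈ S \ strictBranch S z → w = z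
  · exact ⟨_, isZonePartition_singleton
      ((isClosedPart_self hS).isZone_diff_strictBranch hS fun _ => hconn), by simp⟩
  push Not at hconn
  obtain ⟨w, hw, ⟨hwS, hwz⟩, hne⟩ := hconn
  obtain ⟨π, hπ, n, hSeq⟩ := hS.exists_eq_branch_nil_union_forest
  rcases exists_common_branch_or_cut hSeq hz hwS with ⟨ρ, hzρ, hwρ⟩ | ⟨s, hs, hsep⟩
  · exact exists_zonePartition_diff_of_mem_branch hS hzρ hwρ hw fun h => hwz ⟨h, hne⟩
  · have hpart := isZonePartition_diff_of_separated hS (isClosedPart_forest hS).branch_nil_union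
      (isClosedPart_forest hS) (disjoint_branch_nil_union_forest hπ) hw hsep
    rw [branch_nil_union_forest_union hs, ← hSeq] at hpart
    exact ⟨_, hpart, Finset.card_le_two.trans (by norm_num)⟩

theorem exists_zonePartition_forest_mem (hS : IsZone t S) (hz : z ∈ S)
    (hk : k ≤ numChildren t z) :
    ∃ Z : Finset (Set (List ℕ)), IsZonePartition t S Z ∧ Z.card ≤ 5 ∧ forest S z 0 k ∈ Z := by
  obtain ⟨Z, hZ, hcard⟩ := exists_zonePartition_diff_strictBranch hS hz
  have hpair := isZonePartition_forest_pair hS (π := z) k.zero_le hk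
  rw [← strictBranch_eq_forest hS hz] at hpair
  have hall := hpair.union hZ Set.disjoint_sdiff_right
  rw [Set.union_sdiff_cancel strictBranch_subset] at hall
  refine ⟨_, hall, (Finset.card_union_le _ _).trans ?_, by simp⟩
  grw [Finset.card_le_two, hcard]

theorem exists_balanced_forest (hS : IsZone t S) (hfin : S.Finite) (hz : z ∈ S)
    (hm : m ≤ 2 * (strictBranch S z).ncard) :
    ∃ z ∈ S, ∃ k ≤ numChildren t z,
      m ≤ 2 * (forest S z 0 k).ncard ∧ (forest S z 0 k).ncard ≤ m := by
  induction hn : (strictBranch S z).ncard using Nat.strong_induction_on generalizing z with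
  | _ n ih =>
  rw [strictBranch_eq_forest hS hz] at hm hn
  obtain h0 | ⟨l, hl, hlt, hle⟩ := Nat.le_apply_zero_or_exists_crossing
    (g := fun l => 2 * (forest S z 0 l).ncard) hm
  · exact ⟨z, hz, 0, Nat.zero_le _, h0, by simp [forest_self]⟩
  by_cases hle' : (forest S z 0 (l + 1)).ncard ≤ m
  · exact ⟨z, hz, l + 1, hl, hle, hle'⟩
  have hsucc := ncard_forest_succ (π := z) hfin l.zero_le
  have hc : z ++ [l] ∈ S := by
    by_contra hc
    simp only [branch_eq_empty hc, Set.ncard_empty] at hsucc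
    omega
  have hsub := Set.ncard_le_ncard (branch_subset_forest (π := z) l.zero_le hl)
    (hfin.subset forest_subset)
  rw [ncard_branch hfin hc] at hsucc hsub
  exact ih _ (by omega) hc (by omega) rfl

theorem isZonePartition_branch_nil_union_forest (hS : IsZone t S) (hπ : π ∉ S) {s n : ℕ}
    (hs : s ≤ n) :
    IsZonePartition t (branch S [] ∪ forest S π 0 n)
      {branch S [] ∪ forest S π 0 s, forest S π s n} := by
  rw [← branch_nil_union_forest_union hs]
  exact isZonePartition_pair ((isClosedPart_forest hS).branch_nil_union.isZone hS)
    ((isClosedPart_forest hS).isZone hS) (disjoint_branch_nil_union_forest hπ)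

theorem exists_zonePartition_of_ncard_branch_le (hS : IsZone t S) (hfin : S.Finite)
    (hsmall : ∀ x, (branch S x).ncard ≤ m) (hm : m ≤ 2 * S.ncard) :
    ∃ Z : Finset (Set (List ℕ)), IsZonePartition t S Z ∧ Z.card ≤ 3 ∧
      ∃ A ∈ Z, m ≤ 2 * A.ncard ∧ A.ncard ≤ m := by
  obtain ⟨π, hπ, n, hSeq⟩ := hS.exists_eq_branch_nil_union_forest
  have hpair : ∀ s ≤ n, IsZonePartition t S {branch S [] ∪ forest S π 0 s, forest S π s n} := by
    intro s hs
    have h := isZonePartition_branch_nil_union_forest hS hπ hs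
    rwa [← hSeq] at h
  have hcard : ∀ l, (branch S [] ∪ forest S π 0 l).ncard =
      (branch S []).ncard + (forest S π 0 l).ncard := fun l =>
    Set.ncard_union_eq (disjoint_branch_nil_forest hπ) (hfin.subset branch_subset)
      (hfin.subset forest_subset)
  obtain h0 | ⟨l, hl, hlt, hle⟩ := Nat.le_apply_zero_or_exists_crossing
    (g := fun l => 2 * (branch S [] ∪ forest S π 0 l).ncard) (n := n) (hSeq ▸ hm)
  · refine ⟨_, hpair 0 n.zero_le, Finset.card_le_two.trans (by norm_num), _,
      by simp, h0, ?_⟩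
    rw [forest_self, Set.union_empty]
    exact hsmall []
  by_cases hA : (branch S [] ∪ forest S π 0 (l + 1)).ncard ≤ m
  · exact ⟨_, hpair (l + 1) hl, Finset.card_le_two.trans (by norm_num), _, by simp, hle, hA⟩
  have hpart := (isZonePartition_branch_nil_union_forest hS hπ l.le_succ).union
    (isZonePartition_singleton ((isClosedPart_forest hS (π := π) (j := l + 1) (k := n)).isZone hS))
    (disjoint_branch_nil_union_forest hπ)
  rw [branch_nil_union_forest_union hl, ← hSeq] at hpart
  refine ⟨_, hpart, ?_, forest S π l (l + 1), by simp, ?_⟩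
  · grw [Finset.card_union_le, Finset.card_le_two, Finset.card_singleton]
  · have hsucc := ncard_forest_succ (π := π) hfin l.zero_le
    simp only [hcard, hsucc] at hlt hle hA
    rw [forest_succ]
    have := hsmall (π ++ [l])
    omega

end OTree

open OTree in
theorem zone_split_general {α : Type} (t : OTree α) (S : Set (List ℕ)) (m : ℕ)
    (hzone : IsZone t S) (hbig : m < S.ncard) :
    ∃ Z : Finset (Set (List ℕ)),
      IsZonePartition t S Z ∧ Z.card ≤ 5 ∧
      ∃ A ∈ Z, m ≤ 2 * A.ncard ∧ A.ncard ≤ m := by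
  have hfin : S.Finite := Set.finite_of_ncard_pos (by omega)
  by_cases hsmall : ∀ x, (branch S x).ncard ≤ m
  · obtain ⟨Z, hZ, hcard, hA⟩ :=
      exists_zonePartition_of_ncard_branch_le hzone hfin hsmall (by omega)
    exact ⟨Z, hZ, by omega, hA⟩
  push Not at hsmall
  obtain ⟨x, hx⟩ := hsmall
  have hxS : x ∈ S := by
    by_contra h
    simp [branch_eq_empty h] at hx
  rw [ncard_branch hfin hxS] at hx
  obtain ⟨z, hz, k, hk, hmA, hAm⟩ := exists_balanced_forest (m := m) hzone hfin hxS (by omega)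
  obtain ⟨Z, hZ, hcard, hAZ⟩ := exists_zonePartition_forest_mem hzone hz hk
  exact ⟨Z, hZ, hcard, _, hAZ, hmA, hAm⟩

open OTree in
/-- a zone with more than `m ≥ 2` nodes can be partitioned into at most
five zones, one of which has at least `m/2` and at most `m` nodes. -/
theorem zone_split {α : Type} (t : OTree α) (S : Set (List ℕ)) (m : ℕ)
    (hm : 2 ≤ m) (hzone : IsZone t S) (hbig : m < S.ncard) :
    ∃ Z : Finset (Set (List ℕ)),
      IsZonePartition t S Z ∧ Z.card ≤ 5 ∧
      ∃ A ∈ Z, m ≤ 2 * A.ncard ∧ A.ncard ≤ m :=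
  zone_split_general t S m hzone hbig
end

section
/- Let w be a word over a pushdown alphabet with stack-height function s, and define h↘(i,d), for a call position i, as the smallest position j > i with s(j) + d = s(i) (undefined if none exists). Suppose a symbol at position ℓ is changed from a call symbol to a return symbol, so that the new stack-height function s' satisfies s'(i) = s(i) for i < ℓ and s'(i) = s(i) − 2 for i ≥ ℓ (assuming heights stay above 1). Then for positions j ≥ ℓ with witness position at most ℓ, the updated function satisfies h'↙(j,k) = h↙(j, k+2) when h↙(j,k) ≤ ℓ, and h'↙(j,k) = h↙(j,k) otherwise, where h↙(j,d) is defined symmetrically as 1 plus the largest position j' < j with s(j') + d = s(j). -/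
/-!
Changing the symbol at `ℓ` lowers every height from `ℓ` on by `c = 2`. For `j ≥ ℓ` the
condition `s' i + k = s' j` therefore reads `s i + (k + c) = s j` when `i < ℓ` and is unchanged
when `i ≥ ℓ`. The last witness before `j` is then the old `k`-witness when that one lies at or
after `ℓ`, and otherwise the old `(k + c)`-witness, which must lie before `ℓ`.
-/

/-- `HlSpec s j d r`: `r = h↙(j,d)`, i.e. `r = j' + 1` where `j'` is the largest
position `j' < j` with `s(j') + d = s(j)`. -/
def HlSpec (s : ℕ → ℕ) (j d r : ℕ) : Prop :=
  ∃ j', r = j' + 1 ∧ j' < j ∧ s j' + d = s j ∧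
    ∀ j'', j'' < j → s j'' + d = s j → j'' ≤ j'

section HeightDrop

variable {s s' : ℕ → ℕ} {ℓ c i j k : ℕ}

theorem add_eq_iff_of_lt_of_le (hlt : ∀ i, i < ℓ → s' i = s i)
    (hge : ∀ i, ℓ ≤ i → s' i = s i - c) (hfloor : ∀ i, ℓ ≤ i → c ≤ s i)
    (hi : i < ℓ) (hj : ℓ ≤ j) :
    s' i + k = s' j ↔ s i + (k + c) = s j := by
  rw [hlt i hi, hge j hj]
  have := hfloor j hj
  omega

theorem add_eq_iff_of_le_of_le (hge : ∀ i, ℓ ≤ i → s' i = s i - c)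
    (hfloor : ∀ i, ℓ ≤ i → c ≤ s i) (hi : ℓ ≤ i) (hj : ℓ ≤ j) :
    s' i + k = s' j ↔ s i + k = s j := by
  rw [hge i hi, hge j hj]
  have := hfloor i hi
  have := hfloor j hj
  omega

theorem HlSpec.of_drop_of_lt {r : ℕ} (hge : ∀ i, ℓ ≤ i → s' i = s i - c)
    (hfloor : ∀ i, ℓ ≤ i → c ≤ s i) (hj : ℓ ≤ j) (h : HlSpec s j k r) (hr : ℓ < r) :
    HlSpec s' j k r := by
  obtain ⟨j', rfl, hj'j, hj'k, hmax⟩ := h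
  have hℓj' : ℓ ≤ j' := by omega
  refine ⟨j', rfl, hj'j, (add_eq_iff_of_le_of_le hge hfloor hℓj' hj).2 hj'k, ?_⟩
  intro j'' hj''j hj''k
  rcases lt_or_ge j'' ℓ with hj''ℓ | hℓj''
  · omega
  · exact hmax j'' hj''j ((add_eq_iff_of_le_of_le hge hfloor hℓj'' hj).1 hj''k)

theorem HlSpec.of_drop_of_le {r r₂ : ℕ} (hlt : ∀ i, i < ℓ → s' i = s i)
    (hge : ∀ i, ℓ ≤ i → s' i = s i - c) (hfloor : ∀ i, ℓ ≤ i → c ≤ s i) (hj : ℓ ≤ j)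
    (h : HlSpec s j k r) (hr : r ≤ ℓ) (h₂ : HlSpec s j (k + c) r₂) (hr₂ : r₂ ≤ ℓ) :
    HlSpec s' j k r₂ := by
  obtain ⟨j', rfl, -, -, hmax⟩ := h
  obtain ⟨j₂, rfl, hj₂j, hj₂k, hmax₂⟩ := h₂
  refine ⟨j₂, rfl, hj₂j, (add_eq_iff_of_lt_of_le hlt hge hfloor (by omega) hj).2 hj₂k, ?_⟩
  intro j'' hj''j hj''k
  rcases lt_or_ge j'' ℓ with hj''ℓ | hℓj''
  · exact hmax₂ j'' hj''j ((add_eq_iff_of_lt_of_le hlt hge hfloor hj''ℓ hj).1 hj''k)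
  · have := hmax j'' hj''j ((add_eq_iff_of_le_of_le hge hfloor hℓj'' hj).1 hj''k)
    omega

end HeightDrop

/-- if a call at position `ℓ` is changed to a return, so that the
new stack-height function satisfies `s'(i) = s(i)` for `i < ℓ` and
`s'(i) = s(i) − 2` for `i ≥ ℓ` (heights staying above 1), then for positions
`j ≥ ℓ` with witness position at most `ℓ`: `h'↙(j,k) = h↙(j,k+2)` when
`h↙(j,k) ≤ ℓ`, and `h'↙(j,k) = h↙(j,k)` otherwise. -/
theorem hl_update (s s' : ℕ → ℕ) (ℓ : ℕ)
    (hlt : ∀ i, i < ℓ → s' i = s i)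
    (hge : ∀ i, ℓ ≤ i → s' i = s i - 2)
    (hfloor : ∀ i, ℓ ≤ i → 3 ≤ s i) :
    ∀ j k, ℓ ≤ j →
      (∀ r r2, HlSpec s j k r → r ≤ ℓ →
        HlSpec s j (k + 2) r2 → r2 ≤ ℓ → HlSpec s' j k r2) ∧
      (∀ r, HlSpec s j k r → ℓ < r → HlSpec s' j k r) := by
  have hfloor₂ : ∀ i, ℓ ≤ i → 2 ≤ s i := fun i hi => by have := hfloor i hi; omega
  intro j k hj
  exact ⟨fun _ _ h hr h₂ hr₂ => h.of_drop_of_le hlt hge hfloor₂ hj hr h₂ hr₂,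
    fun _ h hr => h.of_drop_of_lt hge hfloor₂ hj hr⟩
end
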